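/- If an enumerable set U of tree-like multisets over F is mergeable, then its relaxed version U° = {t° : t ∈ U} is finite. -/

import Mathlib

/-!
A product of a CFD nests the products of its solitary children one level deeper and those of
its grouped children two levels deeper, so a product of the root needs at most about twice the
depth of the diagram as nesting levels; a product living higher up is the lift of one at that
bounded level. Relaxation commutes with lifting, so every relaxed product is a lift of a relaxed
product of bounded level. At a fixed level there are only finitely many relaxed products: by
induction on the level, a relaxed product is a duplicate-free multiset over the finite set of
features and of relaxed products one level lower.
-/

namespace CFDPaper

noncomputable section

attribute [local instance] Classical.decEq
attribute [local instance] Classical.propDecidable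

/-- Depth-indexed hereditary finite multisets: `HMd A n` models the class `M_{n+1}(A)`
of the cumulative hierarchy of finite multisets over the urelements `A`. -/
@[reducible] def HMd (A : Type) : ℕ → Type
  | 0 => Multiset A
  | n + 1 => Multiset (A ⊕ HMd A n)

variable {A B F : Type}

instance instAddHMd (A : Type) (n : ℕ) : Add (HMd A n) :=
  match n with
  | 0 => inferInstanceAs (Add (Multiset A))
  | n + 1 => inferInstanceAs (Add (Multiset (A ⊕ HMd A n)))

/-- The canonical inclusion `M_{n+1}(A) ⊆ M_{n+2}(A)`. -/
def HMd.up : ∀ n : ℕ, HMd A n → HMd A (n + 1)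
  | 0, m => ((m : Multiset A).map (Sum.inl : A → A ⊕ HMd A 0) : Multiset (A ⊕ HMd A 0))
  | n + 1, m => ((m : Multiset (A ⊕ HMd A n)).map (Sum.map id (HMd.up n)) :
      Multiset (A ⊕ HMd A (n + 1)))

/-- Iterated inclusion along `k ≤ n`. -/
def HMd.liftLe {k n : ℕ} (h : k ≤ n) (m : HMd A k) : HMd A n :=
  Nat.leRecOn h (fun {i} x => HMd.up i x) m

/-- `m` (living at some level of the hierarchy) already appears at level `r`. -/
def comesFrom (r : ℕ) (m : Σ n, HMd A n) : Prop :=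
  ∃ (h : r ≤ m.1) (x : HMd A r), HMd.liftLe h x = m.2

/-- The rank of a hereditary multiset: least level of the hierarchy where it occurs
(`rank m = r` corresponds to paper-rank `r + 1`). -/
def rank (m : Σ n, HMd A n) : ℕ := sInf {r | comesFrom r m}

/-- Equality of hereditary multisets living at different levels, via lifting. -/
def hmEq {k n : ℕ} (x : HMd A k) (y : HMd A n) : Prop :=
  HMd.liftLe (le_max_left k n) x = HMd.liftLe (le_max_right k n) y

/-- Membership of a multiset in the domain (support) of a higher-level multiset. -/
def HMd.Memb {n : ℕ} (x : HMd A n) (m : HMd A (n + 1)) : Prop :=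
  Sum.inr x ∈ (m : Multiset (A ⊕ HMd A n))

/-- The flattening function: flat multiplicity of each urelement. -/
def HMd.flat : ∀ {n : ℕ}, HMd A n → Multiset A
  | 0, m => (m : Multiset A)
  | n + 1, m => (m : Multiset (A ⊕ HMd A n)).bind fun e =>
      match e with
      | Sum.inl a => {a}
      | Sum.inr x => HMd.flat (n := n) x

/-- Top-level multiplicity of an urelement. -/
def HMd.acount : ∀ {n : ℕ}, F → HMd F n → ℕ
  | 0, f, m => (m : Multiset F).count f
  | _ + 1, f, m => (m : Multiset _).count (Sum.inl f)

/-- The multiset-ingredient relation (transitive closure of domain membership). -/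
inductive Ingr (A : Type) : ∀ {k n : ℕ}, HMd A k → HMd A n → Prop
  | mem {n : ℕ} {x : HMd A n} {m : HMd A (n + 1)} : x.Memb m → Ingr A x m
  | tail {k n : ℕ} {x : HMd A k} {y : HMd A n} {m : HMd A (n + 1)} :
      Ingr A x y → y.Memb m → Ingr A x m

/-- Disjointness of flattened domains. -/
def FDisj {k n : ℕ} (x : HMd A k) (y : HMd A n) : Prop :=
  ∀ a, a ∈ x.flat → a ∉ y.flat

/-- The singleton multiset `⌈f⌉` at each level. -/
def HMd.single : ∀ n : ℕ, A → HMd A n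
  | 0, f => ({f} : Multiset A)
  | _ + 1, f => ({Sum.inl f} : Multiset _)

/-- `⌈xᶜ⌉` : the multiset containing `x` with multiplicity `c`. -/
def HMd.rep {n : ℕ} (c : ℕ) (x : HMd A n) : HMd A (n + 1) :=
  (Multiset.replicate c (Sum.inr x) : Multiset (A ⊕ HMd A n))

/-- `⌈t₁^{n₁}, …, t_k^{n_k}⌉` built from a list of tree-multiplicity pairs. -/
def HMd.ofList {n : ℕ} (l : List (HMd A n × ℕ)) : HMd A (n + 1) :=
  ((l.map fun p => Multiset.replicate p.2 (Sum.inr p.1 : A ⊕ HMd A n)).sum :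
    Multiset (A ⊕ HMd A n))

/-- A "group" multiset: one whose domain contains no urelements. -/
def HMd.NoAtoms {n : ℕ} (g : HMd A (n + 1)) : Prop :=
  ∀ a : A, Sum.inl a ∉ (g : Multiset (A ⊕ HMd A n))

/-- Tree-like multisets over `F` (Definition: singleton, solitary-extension,
group-extension; closed under the cumulative inclusions). -/
inductive TreeLike (F : Type) : ∀ n : ℕ, HMd F n → Prop
  | sing (n : ℕ) (f : F) : TreeLike F n (HMd.single n f)
  | up {n : ℕ} {t : HMd F n} : TreeLike F n t → TreeLike F (n + 1) (HMd.up n t)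
  | sol {n : ℕ} {t₁ : HMd F (n + 1)} {t₂ : HMd F n} (c : ℕ) :
      TreeLike F (n + 1) t₁ → TreeLike F n t₂ → FDisj t₁ t₂ →
      TreeLike F (n + 1) (t₁ + HMd.rep c t₂)
  | grp {n : ℕ} {t : HMd F (n + 1)} (l : List (HMd F n × ℕ)) :
      TreeLike F (n + 1) t →
      (∀ p ∈ l, TreeLike F n p.1) →
      (∀ p ∈ l, FDisj t p.1) →
      l.Pairwise (fun p q => FDisj p.1 q.1) →
      TreeLike F (n + 2) (HMd.up (n + 1) t + HMd.rep 1 (HMd.ofList l))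

/-- `x` is an ingredient of `t`, or `t` itself. -/
def IngrE {k n : ℕ} (x : HMd A k) (t : HMd A n) : Prop :=
  Ingr A x t ∨ hmEq x t

/-- `x` occurs (up to lifting) in the domain of `m`. -/
def MemUpTo {k n : ℕ} (x : HMd A k) (m : HMd A (n + 1)) : Prop :=
  ∃ y : HMd A n, HMd.Memb y m ∧ hmEq x y

/-- `x` is the tree-like ingredient of `t` induced by (i.e. with root) `f`. -/
def RootedIngr {n : ℕ} (t : HMd F n) (f : F) {k : ℕ} (x : HMd F k) : Prop :=
  IngrE x t ∧ TreeLike F k x ∧ 0 < HMd.acount f x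

/-- `p` is the parent of `f` in the tree-like multiset `t`: the induced multiset of `f`
lies in the domain of the multiset induced by `p`, directly or inside a group ingredient. -/
def IsParentIn {n : ℕ} (t : HMd F n) (f p : F) : Prop :=
  ∃ (kp : ℕ) (xp : HMd F (kp + 1)), RootedIngr t p xp ∧
    ∃ (kf : ℕ) (xf : HMd F kf), RootedIngr t f xf ∧
      (MemUpTo xf xp ∨
        ∃ (kg : ℕ) (g : HMd F (kg + 1)), MemUpTo g xp ∧ HMd.NoAtoms g ∧ MemUpTo xf g)

/-- `f` occurs grouped in `t`: some group ingredient of `t` has a member with root `f`. -/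
def InGroupOf {n : ℕ} (t : HMd F n) (f : F) : Prop :=
  ∃ (kg : ℕ) (g : HMd F (kg + 1)), Ingr F g t ∧ HMd.NoAtoms g ∧
    ∃ x : HMd F kg, HMd.Memb x g ∧ TreeLike F kg x ∧ 0 < HMd.acount f x

/-- Relaxation: set every multiplicity, at every nesting level, to 1. -/
def HMd.relax : ∀ {n : ℕ}, HMd A n → HMd A n
  | 0, m => ((m : Multiset A).dedup : Multiset A)
  | n + 1, m =>
      (((m : Multiset (A ⊕ HMd A n)).map (Sum.map id (HMd.relax (n := n)))).dedup :
        Multiset (A ⊕ HMd A n))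

/-- Renaming of urelements. -/
def HMd.mapA (g : A → B) : ∀ {n : ℕ}, HMd A n → HMd B n
  | 0, m => ((m : Multiset A).map g : Multiset B)
  | n + 1, m => ((m : Multiset (A ⊕ HMd A n)).map (Sum.map g (HMd.mapA g (n := n))) :
      Multiset (B ⊕ HMd B n))

/-- Cardinality-based feature diagrams over the feature universe `F`. -/
structure CFD (F : Type) where
  feat : Finset F
  root : F
  root_mem : root ∈ feat
  parent : F → F
  parent_mem : ∀ f ∈ feat, f ≠ root → parent f ∈ feat
  reaches : ∀ f ∈ feat,
    Relation.ReflTransGen (fun a b => a ∈ feat ∧ a ≠ root ∧ parent a = b) f root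
  groups : Finset (Finset F)
  groups_sub : ∀ G ∈ groups, ∀ f ∈ G, f ∈ feat ∧ f ≠ root
  groups_card : ∀ G ∈ groups, 1 < G.card
  groups_sib : ∀ G ∈ groups, ∀ f ∈ G, ∀ g ∈ G, parent f = parent g
  groups_disj : ∀ G ∈ groups, ∀ G' ∈ groups, G = G' ∨ Disjoint G G'
  card : F → Set ℕ
  gcard : Finset F → Set ℕ
  card_ok : ∀ f ∈ feat, f ≠ root → (card f).Nonempty ∧ card f ≠ {0}
  gcard_ok : ∀ G ∈ groups,
    (gcard G).Finite ∧ (gcard G).Nonempty ∧ gcard G ≠ {0} ∧ ∀ c ∈ gcard G, c ≤ G.card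
  parent_junk : ∀ f, ¬(f ∈ feat ∧ f ≠ root) → parent f = root
  card_junk : ∀ f, ¬(f ∈ feat ∧ f ≠ root) → card f = ∅
  gcard_junk : ∀ G, G ∉ groups → gcard G = ∅

variable {F : Type}

/-- The solitary (non-grouped) children of `f` in `D`. -/
def solChildren (D : CFD F) (f : F) : Finset F :=
  D.feat.filter fun s => s ≠ D.root ∧ D.parent s = f ∧ ∀ G ∈ D.groups, s ∉ G

/-- The groups whose members are children of `f` in `D`. -/
def childGroups (D : CFD F) (f : F) : Finset (Finset F) :=
  D.groups.filter fun G => ∃ s ∈ G, D.parent s = f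

/-- The hereditary multiset assembled from a choice of sub-products. -/
def prodMS (D : CFD F) (f : F) {n : ℕ} (hs : F → HMd F n) (hc : F → ℕ)
    (hg : Finset F → HMd F n) : HMd F (n + 1) :=
  ((({Sum.inl f} : Multiset (F ⊕ HMd F n))
    + ((solChildren D f).val.map fun s =>
        Multiset.replicate (hc s) (Sum.inr (hs s) : F ⊕ HMd F n)).sum
    + ((childGroups D f).val.map fun G => (Sum.inr (hg G) : F ⊕ HMd F n)))
    : Multiset (F ⊕ HMd F n))

/-- The hereditary multiset assembled from a group selection. -/
def grpMS {n : ℕ} (sel : Finset F) (hs : F → HMd F n) (hc : F → ℕ) : HMd F (n + 1) :=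
  ((sel.val.map fun s =>
      Multiset.replicate (hc s) (Sum.inr (hs s) : F ⊕ HMd F n)).sum :
    Multiset (F ⊕ HMd F n))

mutual
  /-- `HierProd D f m` : `m` is a hierarchical product of the subdiagram of `D` induced by `f`. -/
  inductive HierProd {F : Type} (D : CFD F) : F → ∀ {n : ℕ}, HMd F n → Prop
    | mk {n : ℕ} (f : F) (hs : F → HMd F n) (hc : F → ℕ) (hg : Finset F → HMd F n)
        (hf : f ∈ D.feat)
        (hsol : ∀ s ∈ solChildren D f, HierProd D s (hs s))
        (hsolc : ∀ s ∈ solChildren D f, hc s ∈ D.card s)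
        (hgrp : ∀ G ∈ childGroups D f, GroupProd D G (hg G)) :
        HierProd D f (prodMS D f hs hc hg)
  /-- `GroupProd D G m` : `m` is a hierarchical product associated with the group `G` of `D`. -/
  inductive GroupProd {F : Type} (D : CFD F) : Finset F → ∀ {n : ℕ}, HMd F n → Prop
    | mk {n : ℕ} (G sel : Finset F) (hs : F → HMd F n) (hc : F → ℕ)
        (hsub : sel ⊆ G) (hG : G ∈ D.groups) (hcard : sel.card ∈ D.gcard G)
        (hmem : ∀ s ∈ sel, HierProd D s (hs s))
        (hmemc : ∀ s ∈ sel, hc s ∈ D.card s) :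
        GroupProd D G (grpMS sel hs hc)
end

/-- The hierarchical theory of `D` (as a set of hereditary multisets at all levels). -/
def ProductsSet (D : CFD F) : Set (Σ n, HMd F n) := {m | HierProd D D.root m.2}

/-- A set of (tree-like) multisets is mergeable if a single CFD represents all of them. -/
def Mergeable (U : Set (Σ n, HMd F n)) : Prop :=
  ∃ D : CFD F, ∀ m ∈ U, HierProd D D.root m.2

/-- A set is completely mergeable if it is exactly the hierarchical theory of some CFD. -/
def CompletelyMergeable (U : Set (Σ n, HMd F n)) : Prop :=
  ∃ D : CFD F, U = ProductsSet D

/-- Pointwise relaxation of a set of hereditary multisets. -/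
def relaxSet (U : Set (Σ n, HMd F n)) : Set (Σ n, HMd F n) :=
  {x | ∃ m ∈ U, x = ⟨m.1, HMd.relax m.2⟩}

/-- The flat products of `D` (Definition of flat theory). -/
def FlatProd (D : CFD F) (m : Multiset F) : Prop :=
  (∀ f ∈ m, f ∈ D.feat) ∧
  m.count D.root = 1 ∧
  (∀ f ∈ D.feat, f ≠ D.root → 0 < m.count f →
    ∃ c ∈ D.card f, m.count f = c * m.count (D.parent f)) ∧
  (∀ f ∈ D.feat, f ≠ D.root → (∀ G ∈ D.groups, f ∉ G) → 0 ∉ D.card f →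
    0 < m.count (D.parent f) → 0 < m.count f) ∧
  (∀ G ∈ D.groups, ∀ g ∈ G, 0 < m.count (D.parent g) →
    (G.filter fun f => 0 < m.count f).card ∈ D.gcard G)

/-- Rooted (possibly countably infinite) trees with explicit parent function. -/
structure RTree (N : Type) where
  nodes : Set N
  countable : nodes.Countable
  root : N
  root_mem : root ∈ nodes
  parent : N → N
  parent_mem : ∀ f ∈ nodes, f ≠ root → parent f ∈ nodes
  reaches : ∀ f ∈ nodes,
    Relation.ReflTransGen (fun a b => a ∈ nodes ∧ a ≠ root ∧ parent a = b) f root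

instance HMd.instNonempty : ∀ n : ℕ, Nonempty (HMd A n)
  | 0 => ⟨(0 : Multiset A)⟩
  | _ + 1 => ⟨(0 : Multiset _)⟩

namespace HMd

theorem up_injective : ∀ n : ℕ, Function.Injective (up (A := A) n)
  | 0 => Multiset.map_injective Sum.inl_injective
  | n + 1 => Multiset.map_injective (Function.injective_id.sumMap (up_injective n))

theorem liftLe_refl {n : ℕ} (h : n ≤ n) (x : HMd A n) : liftLe h x = x :=
  Nat.leRecOn_self x

theorem liftLe_succ {k n : ℕ} (h : k ≤ n) (h' : k ≤ n + 1) (x : HMd A k) :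
    liftLe h' x = up n (liftLe h x) :=
  Nat.leRecOn_succ h x

theorem liftLe_trans {k m n : ℕ} (h₁ : k ≤ m) (h₂ : m ≤ n) (x : HMd A k) :
    liftLe (h₁.trans h₂) x = liftLe h₂ (liftLe h₁ x) :=
  Nat.leRecOn_trans h₁ h₂ x

theorem liftLe_succ_succ {k n : ℕ} (h : k ≤ n) (h' : k + 1 ≤ n + 1) (x : HMd A (k + 1)) :
    liftLe h' x = (x : Multiset (A ⊕ HMd A k)).map (Sum.map id (liftLe h)) := by
  induction n, h using Nat.le_induction with
  | base =>
    rw [liftLe_refl, show liftLe (le_refl k) = (id : HMd A k → HMd A k) from funext (liftLe_refl _),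
      Sum.map_id_id, Multiset.map_id]
  | succ n h ih =>
    rw [liftLe_succ (Nat.succ_le_succ h), ih (Nat.succ_le_succ h)]
    simp only [up, Multiset.map_map]
    congr 1
    ext (a | y) <;> simp [liftLe_succ h]

theorem hmEq_liftLe {k n : ℕ} (h : k ≤ n) (x : HMd A k) : hmEq (liftLe h x) x := by
  rw [hmEq, ← liftLe_trans]

theorem relax_up (n : ℕ) (m : HMd A n) : relax (up n m) = up n (relax m) := by
  induction n with
  | zero =>
    simp only [relax, up, Multiset.map_map]
    rw [← Multiset.dedup_map_of_injective Sum.inl_injective]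
    -- `relax` uses `Classical.decEq` on `HMd A 0`, the rewritten side the `Multiset` instance
    congr 1
    exact Subsingleton.elim _ _
  | succ n ih =>
    have hcomm : (Sum.map id relax ∘ Sum.map id (up n) : A ⊕ HMd A n → A ⊕ HMd A (n + 1)) =
        Sum.map id (up n) ∘ Sum.map id relax := by
      ext (a | y) <;> simp [ih]
    rw [relax.eq_2, relax.eq_2, up.eq_2, up.eq_2, Multiset.map_map, hcomm, ← Multiset.map_map,
      ← Multiset.dedup_map_of_injective (Function.injective_id.sumMap (up_injective n))]
    congr 1
    exact Subsingleton.elim _ _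

theorem relax_liftLe {k n : ℕ} (h : k ≤ n) (x : HMd A k) :
    relax (liftLe h x) = liftLe h (relax x) := by
  induction n, h using Nat.le_induction with
  | base => rw [liftLe_refl, liftLe_refl]
  | succ n h ih => rw [liftLe_succ h, liftLe_succ h, relax_up, ih]

end HMd

theorem Multiset.map_finsetSum {ι α β : Type*} (f : α → β) (s : Finset ι) (g : ι → Multiset α) :
    (∑ i ∈ s, g i).map f = ∑ i ∈ s, (g i).map f :=
  map_sum (Multiset.mapAddMonoidHom f) g s

section Products

variable (D : CFD F)

theorem map_prodMS (f : F) {k n : ℕ} (g : HMd F k → HMd F n) (hs : F → HMd F k) (hc : F → ℕ)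
    (hg : Finset F → HMd F k) :
    (prodMS D f hs hc hg : Multiset (F ⊕ HMd F k)).map (Sum.map id g) =
      prodMS D f (g ∘ hs) hc (g ∘ hg) := by
  simp [prodMS, Multiset.map_finsetSum, Function.comp_def]

theorem map_grpMS (sel : Finset F) {k n : ℕ} (g : HMd F k → HMd F n) (hs : F → HMd F k)
    (hc : F → ℕ) :
    (grpMS sel hs hc : Multiset (F ⊕ HMd F k)).map (Sum.map id g) = grpMS sel (g ∘ hs) hc := by
  simp [grpMS, Multiset.map_finsetSum]

theorem prodMS_congr (f : F) {n : ℕ} {hs hs' : F → HMd F n} (hc : F → ℕ)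
    {hg hg' : Finset F → HMd F n} (h₁ : ∀ s ∈ solChildren D f, hs s = hs' s)
    (h₂ : ∀ G ∈ childGroups D f, hg G = hg' G) :
    prodMS D f hs hc hg = prodMS D f hs' hc hg' := by
  simp only [prodMS, ← Finset.sum_eq_multiset_sum]
  rw [Finset.sum_congr rfl fun s hs => by rw [h₁ s hs],
    Multiset.map_congr rfl fun G hG => by rw [h₂ G hG]]

theorem grpMS_congr (sel : Finset F) {n : ℕ} {hs hs' : F → HMd F n} (hc : F → ℕ)
    (h : ∀ s ∈ sel, hs s = hs' s) : grpMS sel hs hc = grpMS sel hs' hc := by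
  simp only [grpMS, ← Finset.sum_eq_multiset_sum]
  exact Finset.sum_congr rfl fun s hs => by rw [h s hs]

end Products

namespace CFD

variable (D : CFD F)

def depth (f : F) : ℕ := sInf {k | D.parent^[k] f = D.root}

/-- `D.feat.sup D.depth + 1` exceeds every depth, and each step down the tree costs one level
for the product and possibly one for a group. -/
def levelBound (f : F) : ℕ := 2 * (D.feat.sup D.depth + 1 - D.depth f)

def groupLevelBound (G : Finset F) : ℕ := G.sup D.levelBound + 1

variable {D}

theorem exists_iterate_parent_eq_root {f : F} (hf : f ∈ D.feat) :
    ∃ k, D.parent^[k] f = D.root := by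
  have hreach := D.reaches f hf
  clear hf
  induction hreach using Relation.ReflTransGen.head_induction_on with
  | refl => exact ⟨0, rfl⟩
  | head hstep _ ih =>
    obtain ⟨k, hk⟩ := ih
    exact ⟨k + 1, by rwa [Function.iterate_succ_apply, hstep.2.2]⟩

theorem depth_parent_lt {s : F} (hs : s ∈ D.feat) (hsr : s ≠ D.root) :
    D.depth (D.parent s) < D.depth s := by
  have hmem : D.parent^[D.depth s] s = D.root := Nat.sInf_mem (exists_iterate_parent_eq_root hs)
  obtain ⟨k, hk⟩ : ∃ k, D.depth s = k + 1 :=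
    Nat.exists_eq_succ_of_ne_zero fun h0 => hsr (by rwa [h0] at hmem)
  rw [hk, Function.iterate_succ_apply] at hmem
  exact hk ▸ Nat.lt_succ_of_le (Nat.sInf_le hmem)

theorem two_le_levelBound {f : F} (hf : f ∈ D.feat) : 2 ≤ D.levelBound f := by
  have := Finset.le_sup (f := D.depth) hf
  unfold levelBound
  omega

theorem levelBound_add_two_le {s : F} (hs : s ∈ D.feat) (hsr : s ≠ D.root) :
    D.levelBound s + 2 ≤ D.levelBound (D.parent s) := by
  have := Finset.le_sup (f := D.depth) hs
  have := depth_parent_lt hs hsr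
  unfold levelBound
  omega

theorem mem_solChildren {f s : F} (h : s ∈ solChildren D f) :
    s ∈ D.feat ∧ s ≠ D.root ∧ D.parent s = f := by
  simp only [solChildren, Finset.mem_filter] at h
  exact ⟨h.1, h.2.1, h.2.2.1⟩

theorem levelBound_lt_of_mem_solChildren {f s : F} (h : s ∈ solChildren D f) :
    D.levelBound s < D.levelBound f := by
  obtain ⟨hs, hsr, rfl⟩ := mem_solChildren h
  have := levelBound_add_two_le hs hsr
  omega

theorem groupLevelBound_lt {f : F} {G : Finset F} (hG : G ∈ childGroups D f) :
    D.groupLevelBound G < D.levelBound f := by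
  simp only [childGroups, Finset.mem_filter] at hG
  obtain ⟨hG, s₀, hs₀, rfl⟩ := hG
  have hle : ∀ s ∈ G, D.levelBound s + 2 ≤ D.levelBound (D.parent s₀) := fun s hs => by
    obtain ⟨hsF, hsr⟩ := D.groups_sub G hG s hs
    rw [← D.groups_sib G hG s hs s₀ hs₀]
    exact levelBound_add_two_le hsF hsr
  have hsup : G.sup D.levelBound ≤ D.levelBound (D.parent s₀) - 2 :=
    Finset.sup_le fun s hs => by have := hle s hs; omega
  have := hle s₀ hs₀
  unfold groupLevelBound
  omega

end CFD

section Descent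

variable (D : CFD F)

def ProdsDescend (n : ℕ) : Prop :=
  ∀ ⦃f : F⦄ ⦃m : HMd F n⦄, HierProd D f m → ∀ ⦃L : ℕ⦄ (hL : L ≤ n), D.levelBound f ≤ L →
    ∃ m₀ : HMd F L, HierProd D f m₀ ∧ m = HMd.liftLe hL m₀

def GroupProdsDescend (n : ℕ) : Prop :=
  ∀ ⦃G : Finset F⦄ ⦃m : HMd F n⦄, GroupProd D G m → ∀ ⦃L : ℕ⦄ (hL : L ≤ n),
    D.groupLevelBound G ≤ L → ∃ m₀ : HMd F L, GroupProd D G m₀ ∧ m = HMd.liftLe hL m₀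

variable {D}

theorem groupProdsDescend_succ {n : ℕ} (ih : ProdsDescend D n) :
    GroupProdsDescend D (n + 1) := by
  intro G m hm L hL hGL
  cases hm with | mk G sel hs hc hsub hG hcard hmem hmemc => ?_
  obtain _ | L := L
  · simp [CFD.groupLevelBound] at hGL
  have hL' : L ≤ n := Nat.le_of_succ_le_succ hL
  have hmem_le : ∀ s ∈ sel, D.levelBound s ≤ L := fun s hs =>
    (Finset.le_sup (hsub hs)).trans (Nat.le_of_succ_le_succ hGL)
  choose! ms hms hms_eq using fun s hs => ih (hmem s hs) hL' (hmem_le s hs)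
  refine ⟨grpMS sel ms hc, GroupProd.mk G sel ms hc hsub hG hcard hms hmemc, ?_⟩
  rw [HMd.liftLe_succ_succ hL', map_grpMS]
  exact grpMS_congr sel hc hms_eq

theorem prodsDescend_succ {n : ℕ} (ih : ProdsDescend D n) (ihG : GroupProdsDescend D n) :
    ProdsDescend D (n + 1) := by
  intro f m hm L hL hfL
  cases hm with | mk f hs hc hg hf hsol hsolc hgrp => ?_
  obtain _ | L := L
  · exact absurd hfL (by have := CFD.two_le_levelBound hf; omega)
  have hL' : L ≤ n := Nat.le_of_succ_le_succ hL
  choose! ms hms hms_eq using fun s hs => ih (hsol s hs) hL'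
    (by have := CFD.levelBound_lt_of_mem_solChildren hs; omega)
  choose! mg hmg hmg_eq using fun G hG => ihG (hgrp G hG) hL'
    (by have := CFD.groupLevelBound_lt hG; omega)
  refine ⟨prodMS D f ms hc mg, HierProd.mk f ms hc mg hf hms hsolc hmg, ?_⟩
  rw [HMd.liftLe_succ_succ hL', map_prodMS]
  exact prodMS_congr D f hc hms_eq hmg_eq

theorem prodsDescend (n : ℕ) : ProdsDescend D n ∧ GroupProdsDescend D n := by
  induction n with
  | zero => exact ⟨fun _ _ h => (nomatch h), fun _ _ h => (nomatch h)⟩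
  | succ n ih => exact ⟨prodsDescend_succ ih.1 ih.2, groupProdsDescend_succ ih.1⟩

end Descent

theorem finite_image_dedup {α : Type*} [DecidableEq α] {T : Set α} (hT : T.Finite) :
    (Multiset.dedup '' {s : Multiset α | ∀ a ∈ s, a ∈ T}).Finite := by
  refine ((hT.toFinset.powerset : Set (Finset α)).toFinite.image Finset.val).subset ?_
  rintro _ ⟨s, hs, rfl⟩
  refine ⟨s.toFinset, ?_, Multiset.toFinset_val s⟩
  exact Finset.mem_powerset.2 fun a ha => hT.mem_toFinset.2 (hs a (Multiset.mem_toFinset.1 ha))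

section Finiteness

variable (D : CFD F)

def IsProduct {n : ℕ} (m : HMd F n) : Prop :=
  (∃ f, HierProd D f m) ∨ ∃ G, GroupProd D G m

def relaxedProducts (n : ℕ) : Set (HMd F n) :=
  HMd.relax '' {m | IsProduct D m}

variable {D}

theorem IsProduct.sum_elim_of_mem {n : ℕ} {m : HMd F (n + 1)} (hm : IsProduct D m)
    {a : F ⊕ HMd F n} (ha : a ∈ (m : Multiset (F ⊕ HMd F n))) :
    Sum.elim (· ∈ D.feat) (IsProduct D) a := by
  rcases hm with ⟨f, hm⟩ | ⟨G, hm⟩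
  · cases hm with | mk f hs hc hg hf hsol _ hgrp =>
    simp only [prodMS, Finset.sum_map_val, Multiset.mem_add, Multiset.mem_singleton,
      Multiset.mem_sum, Multiset.mem_replicate, Multiset.mem_map, Finset.mem_val] at ha
    rcases ha with (rfl | ⟨s, hs, -, rfl⟩) | ⟨G, hG, rfl⟩
    · exact hf
    · exact Or.inl ⟨s, hsol s hs⟩
    · exact Or.inr ⟨G, hgrp G hG⟩
  · cases hm with | mk G sel hs hc _ _ _ hmem =>
    simp only [grpMS, Finset.sum_map_val, Multiset.mem_sum, Multiset.mem_replicate] at ha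
    obtain ⟨s, hs, -, rfl⟩ := ha
    exact Or.inl ⟨s, hmem s hs⟩

theorem relaxedProducts_finite (n : ℕ) : (relaxedProducts D n).Finite := by
  induction n with
  | zero =>
    refine Set.finite_empty.subset ?_
    rintro _ ⟨m, ⟨f, h⟩ | ⟨G, h⟩, rfl⟩ <;> nomatch h
  | succ n ih =>
    refine (finite_image_dedup ((D.feat.finite_toSet.image Sum.inl).union
      (ih.image Sum.inr))).subset ?_
    rintro _ ⟨m, hm, rfl⟩
    refine ⟨(m : Multiset (F ⊕ HMd F n)).map (Sum.map id HMd.relax), ?_, rfl⟩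
    intro _ ha
    obtain ⟨f | x, hmem, rfl⟩ := Multiset.mem_map.1 ha
    · exact Or.inl ⟨f, hm.sum_elim_of_mem hmem, rfl⟩
    · exact Or.inr ⟨HMd.relax x, ⟨x, hm.sum_elim_of_mem hmem, rfl⟩, rfl⟩

theorem HierProd.exists_hmEq_relax {f : F} {n : ℕ} {m : HMd F n} (hm : HierProd D f m) :
    ∃ k ≤ D.levelBound f, ∃ y ∈ relaxedProducts D k, hmEq (HMd.relax m) y := by
  by_cases hn : n ≤ D.levelBound f
  · exact ⟨n, hn, _, ⟨m, Or.inl ⟨f, hm⟩, rfl⟩, rfl⟩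
  · obtain ⟨m₀, hm₀, rfl⟩ := (prodsDescend n).1 hm (not_le.1 hn).le le_rfl
    refine ⟨_, le_rfl, _, ⟨m₀, Or.inl ⟨f, hm₀⟩, rfl⟩, ?_⟩
    rw [HMd.relax_liftLe]
    exact HMd.hmEq_liftLe _ _

end Finiteness

/-- if an enumerable set of tree-like multisets is mergeable, then its
relaxed version is finite (up to the identification of a multiset with its lifts). -/
theorem mergeable_relax_finite (F : Type) (U : Set (Σ n, HMd F n))
    (hcnt : U.Countable) (hU : ∀ m ∈ U, TreeLike F m.1 m.2) (h : Mergeable U) :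
    ∃ L : List (Σ n, HMd F n), ∀ x ∈ relaxSet U, ∃ y ∈ L, hmEq x.2 y.2 := by
  obtain ⟨D, hD⟩ := h
  have hfin : (⋃ k ∈ {k | k ≤ D.levelBound D.root},
      Sigma.mk k '' relaxedProducts D k : Set (Σ n, HMd F n)).Finite :=
    (Set.finite_le_nat _).biUnion fun k _ => (relaxedProducts_finite k).image _
  refine ⟨hfin.toFinset.toList, ?_⟩
  rintro _ ⟨m, hm, rfl⟩
  obtain ⟨k, hk, y, hy, hmy⟩ := (hD m hm).exists_hmEq_relax
  exact ⟨⟨k, y⟩, Finset.mem_toList.2 (hfin.mem_toFinset.2 (Set.mem_biUnion hk ⟨y, hy, rfl⟩)),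
    hmy⟩

end
end CFDPaper
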